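/- For the uniform distribution on the boundary of the regular hexagon inscribed in the unit circle, with conditional set the six vertices and constraint the circumcircle, the 7-th conditional constrained quantization error equals √3/2 − 19/24, attained by α_7 = β ∪ {(0, −1)}. -/

import Mathlib

open Real

noncomputable section

/-- Squared Euclidean distance in the plane. -/
def sqDist (p q : ℝ × ℝ) : ℝ := (p.1 - q.1) ^ 2 + (p.2 - q.2) ^ 2

/-- Vertices of the regular hexagon inscribed in the unit circle. -/
def hexVtx : Fin 6 → ℝ × ℝ :=
  ![(-(1 / 2), -(Real.sqrt 3 / 2)), (1 / 2, -(Real.sqrt 3 / 2)), (1, 0),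
    (1 / 2, Real.sqrt 3 / 2), (-(1 / 2), Real.sqrt 3 / 2), (-1, 0)]

/-- Distortion error of a set `γ` for the uniform distribution on the hexagon boundary:
each side has length `1` and the density per unit arc length is `1/6`. -/
def hexError (γ : Set (ℝ × ℝ)) : ℝ :=
  ∑ j : Fin 6, (1 / 6 : ℝ) *
    ∫ t in (0 : ℝ)..1,
      sInf ((fun a => sqDist ((1 - t) • hexVtx j + t • hexVtx (j + 1)) a) '' γ)

/-- The conditional set: the six vertices of the hexagon. -/
def hexβ : Set (ℝ × ℝ) := Set.range hexVtx

/-- The `7`-th conditional constrained quantization error with constraint the unit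
circumcircle: one extra point, constrained to lie on the circle. -/
def V7 : ℝ :=
  sInf ((fun α : Set (ℝ × ℝ) => hexError (α ∪ hexβ)) ''
    {α : Set (ℝ × ℝ) | α ⊆ {p : ℝ × ℝ | p.1 ^ 2 + p.2 ^ 2 = 1} ∧ α.Finite ∧ α.ncard ≤ 1})

lemma hexVtx0 : hexVtx 0 = (-(1/2), -(Real.sqrt 3/2)) := rfl
lemma hexVtx1 : hexVtx 1 = (1/2, -(Real.sqrt 3/2)) := rfl
lemma hexVtx2 : hexVtx 2 = (1, 0) := rfl
lemma hexVtx3 : hexVtx 3 = (1/2, Real.sqrt 3/2) := rfl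
lemma hexVtx4 : hexVtx 4 = (-(1/2), Real.sqrt 3/2) := rfl
lemma hexVtx5 : hexVtx 5 = (-1, 0) := rfl

lemma r3sq : Real.sqrt 3 ^ 2 = 3 := Real.sq_sqrt (by norm_num)
lemma r3nn : (0:ℝ) ≤ Real.sqrt 3 := Real.sqrt_nonneg 3
lemma r3lb : (3/2:ℝ) ≤ Real.sqrt 3 := by nlinarith [r3sq, r3nn]
lemma r3ub : Real.sqrt 3 ≤ 7/4 := by nlinarith [r3sq, r3nn]

lemma min_sq_le_quarter {t : ℝ} (h0 : 0 ≤ t) (h1 : t ≤ 1) :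
    min (t^2) ((1-t)^2) ≤ 1/4 := by
  rcases le_total t (1/2) with h|h
  · exact min_le_of_left_le (by nlinarith)
  · exact min_le_of_right_le (by nlinarith)

lemma side0 (t:ℝ) : (1-t) • hexVtx 0 + t • hexVtx (0+1 : Fin 6) = (t - 1/2, -(Real.sqrt 3/2)) := by
  show (1-t) • hexVtx 0 + t • hexVtx 1 = _
  simp only [hexVtx0, hexVtx1, hexVtx2, hexVtx3, hexVtx4, hexVtx5, Prod.smul_mk, smul_eq_mul, Prod.mk_add_mk, Prod.mk.injEq]
  constructor <;> ring

lemma side1 (t:ℝ) : (1-t) • hexVtx 1 + t • hexVtx (1+1 : Fin 6) = ((1+t)/2, (t-1) * Real.sqrt 3/2) := by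
  show (1-t) • hexVtx 1 + t • hexVtx 2 = _
  simp only [hexVtx0, hexVtx1, hexVtx2, hexVtx3, hexVtx4, hexVtx5, Prod.smul_mk, smul_eq_mul, Prod.mk_add_mk, Prod.mk.injEq]
  constructor <;> ring

lemma side2 (t:ℝ) : (1-t) • hexVtx 2 + t • hexVtx (2+1 : Fin 6) = (1 - t/2, t * Real.sqrt 3/2) := by
  show (1-t) • hexVtx 2 + t • hexVtx 3 = _
  simp only [hexVtx0, hexVtx1, hexVtx2, hexVtx3, hexVtx4, hexVtx5, Prod.smul_mk, smul_eq_mul, Prod.mk_add_mk, Prod.mk.injEq]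
  constructor <;> ring

lemma side3 (t:ℝ) : (1-t) • hexVtx 3 + t • hexVtx (3+1 : Fin 6) = (1/2 - t, Real.sqrt 3/2) := by
  show (1-t) • hexVtx 3 + t • hexVtx 4 = _
  simp only [hexVtx0, hexVtx1, hexVtx2, hexVtx3, hexVtx4, hexVtx5, Prod.smul_mk, smul_eq_mul, Prod.mk_add_mk, Prod.mk.injEq]
  constructor <;> ring

lemma side4 (t:ℝ) : (1-t) • hexVtx 4 + t • hexVtx (4+1 : Fin 6) = (-(1+t)/2, (1-t) * Real.sqrt 3/2) := by
  show (1-t) • hexVtx 4 + t • hexVtx 5 = _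
  simp only [hexVtx0, hexVtx1, hexVtx2, hexVtx3, hexVtx4, hexVtx5, Prod.smul_mk, smul_eq_mul, Prod.mk_add_mk, Prod.mk.injEq]
  constructor <;> ring

lemma side5 (t:ℝ) : (1-t) • hexVtx 5 + t • hexVtx (5+1 : Fin 6) = (t/2 - 1, -(t * Real.sqrt 3/2)) := by
  show (1-t) • hexVtx 5 + t • hexVtx 0 = _
  simp only [hexVtx0, hexVtx1, hexVtx2, hexVtx3, hexVtx4, hexVtx5, Prod.smul_mk, smul_eq_mul, Prod.mk_add_mk, Prod.mk.injEq]
  constructor <;> ring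

def Nmin (x : ℝ × ℝ) : ℝ :=
  min (min (min (sqDist x (hexVtx 0)) (sqDist x (hexVtx 1))) (min (sqDist x (hexVtx 2)) (sqDist x (hexVtx 3)))) (min (sqDist x (hexVtx 4)) (sqDist x (hexVtx 5)))

def Mmin (x a : ℝ × ℝ) : ℝ := min (sqDist x a) (Nmin x)

lemma hexβ_eq : hexβ = {hexVtx 0, hexVtx 1, hexVtx 2, hexVtx 3, hexVtx 4, hexVtx 5} := by
  ext p
  simp only [hexβ, Set.mem_range, Set.mem_insert_iff, Set.mem_singleton_iff]
  constructor
  · rintro ⟨j, rfl⟩; fin_cases j <;> tauto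
  · rintro (h|h|h|h|h|h) <;> exact ⟨_, h.symm⟩

lemma sqDist_nonneg (x p : ℝ × ℝ) : 0 ≤ sqDist x p := by
  unfold sqDist; positivity

lemma sInf_image7 (x a : ℝ × ℝ) :
    sInf ((fun b => sqDist x b) '' ({a} ∪ hexβ)) = Mmin x a := by
  rw [hexβ_eq]
  have h : ({a} ∪ ({hexVtx 0, hexVtx 1, hexVtx 2, hexVtx 3, hexVtx 4, hexVtx 5} : Set (ℝ×ℝ)))
      = insert a {hexVtx 0, hexVtx 1, hexVtx 2, hexVtx 3, hexVtx 4, hexVtx 5} := by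
    rw [Set.singleton_union]
  rw [h]
  simp only [Set.image_insert_eq, Set.image_singleton]
  have hbb : ∀ s : Set ℝ, s.Finite → BddBelow s := fun s hs => hs.bddBelow
  rw [csInf_insert ((Set.toFinite _).bddBelow) (Set.insert_nonempty _ _),
      csInf_insert ((Set.toFinite _).bddBelow) (Set.insert_nonempty _ _),
      csInf_insert ((Set.toFinite _).bddBelow) (Set.insert_nonempty _ _),
      csInf_insert ((Set.toFinite _).bddBelow) (Set.insert_nonempty _ _),
      csInf_insert ((Set.toFinite _).bddBelow) (Set.insert_nonempty _ _),
      csInf_insert ((Set.toFinite _).bddBelow) (Set.singleton_nonempty _),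
      csInf_singleton]
  simp only [Mmin, Nmin, show ∀ a b : ℝ, a ⊓ b = min a b from fun _ _ => rfl]
  ac_rfl

lemma Nmin_le (x : ℝ × ℝ) (k : Fin 6) : Nmin x ≤ sqDist x (hexVtx k) := by
  fin_cases k
  · exact min_le_of_left_le (min_le_of_left_le (min_le_left _ _))
  · exact min_le_of_left_le (min_le_of_left_le (min_le_right _ _))
  · exact min_le_of_left_le (min_le_of_right_le (min_le_left _ _))
  · exact min_le_of_left_le (min_le_of_right_le (min_le_right _ _))
  · exact min_le_of_right_le (min_le_left _ _)
  · exact min_le_of_right_le (min_le_right _ _)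

lemma le_Nmin {x : ℝ × ℝ} {r : ℝ} (g0 : r ≤ sqDist x (hexVtx 0)) (g1 : r ≤ sqDist x (hexVtx 1))
    (g2 : r ≤ sqDist x (hexVtx 2)) (g3 : r ≤ sqDist x (hexVtx 3))
    (g4 : r ≤ sqDist x (hexVtx 4)) (g5 : r ≤ sqDist x (hexVtx 5)) : r ≤ Nmin x :=
  le_min (le_min (le_min g0 g1) (le_min g2 g3)) (le_min g4 g5)

lemma N0 {t : ℝ} (h0 : 0 ≤ t) (h1 : t ≤ 1) :
    Nmin (t - 1/2, -(Real.sqrt 3/2)) = min (t^2) ((1-t)^2) := by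
  have q := min_sq_le_quarter h0 h1
  have ea : sqDist (t - 1/2, -(Real.sqrt 3/2)) (hexVtx 0) = t^2 := by
    simp only [sqDist, hexVtx0, Prod.fst, Prod.snd]; ring
  have eb : sqDist (t - 1/2, -(Real.sqrt 3/2)) (hexVtx 1) = (1-t)^2 := by
    simp only [sqDist, hexVtx1, Prod.fst, Prod.snd]; ring
  have b2 : (1/4:ℝ) ≤ sqDist (t - 1/2, -(Real.sqrt 3/2)) (hexVtx 2) := by
    simp only [sqDist, hexVtx2, Prod.fst, Prod.snd]; nlinarith [r3sq, r3nn]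
  have b3 : (1/4:ℝ) ≤ sqDist (t - 1/2, -(Real.sqrt 3/2)) (hexVtx 3) := by
    simp only [sqDist, hexVtx3, Prod.fst, Prod.snd]; nlinarith [r3sq, r3nn]
  have b4 : (1/4:ℝ) ≤ sqDist (t - 1/2, -(Real.sqrt 3/2)) (hexVtx 4) := by
    simp only [sqDist, hexVtx4, Prod.fst, Prod.snd]; nlinarith [r3sq, r3nn]
  have b5 : (1/4:ℝ) ≤ sqDist (t - 1/2, -(Real.sqrt 3/2)) (hexVtx 5) := by
    simp only [sqDist, hexVtx5, Prod.fst, Prod.snd]; nlinarith [r3sq, r3nn]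
  apply le_antisymm
  · exact le_min (ea ▸ Nmin_le _ 0) (eb ▸ Nmin_le _ 1)
  · refine le_Nmin ?_ ?_ ?_ ?_ ?_ ?_
    · rw [ea]; exact min_le_left _ _
    · rw [eb]; exact min_le_right _ _
    · exact q.trans b2
    · exact q.trans b3
    · exact q.trans b4
    · exact q.trans b5

lemma N1 {t : ℝ} (h0 : 0 ≤ t) (h1 : t ≤ 1) :
    Nmin ((1+t)/2, (t-1) * Real.sqrt 3/2) = min (t^2) ((1-t)^2) := by
  have q := min_sq_le_quarter h0 h1
  have ea : sqDist ((1+t)/2, (t-1) * Real.sqrt 3/2) (hexVtx 1) = t^2 := by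
    simp only [sqDist, hexVtx1, Prod.fst, Prod.snd]; linear_combination (t^2/4) * r3sq
  have eb : sqDist ((1+t)/2, (t-1) * Real.sqrt 3/2) (hexVtx 2) = (1-t)^2 := by
    simp only [sqDist, hexVtx2, Prod.fst, Prod.snd]; linear_combination ((t-1)^2/4) * r3sq
  have b0 : (1/4:ℝ) ≤ sqDist ((1+t)/2, (t-1) * Real.sqrt 3/2) (hexVtx 0) := by
    simp only [sqDist, hexVtx0, Prod.fst, Prod.snd]; nlinarith [r3sq, r3nn]
  have b3 : (1/4:ℝ) ≤ sqDist ((1+t)/2, (t-1) * Real.sqrt 3/2) (hexVtx 3) := by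
    simp only [sqDist, hexVtx3, Prod.fst, Prod.snd]; nlinarith [r3sq, r3nn]
  have b4 : (1/4:ℝ) ≤ sqDist ((1+t)/2, (t-1) * Real.sqrt 3/2) (hexVtx 4) := by
    simp only [sqDist, hexVtx4, Prod.fst, Prod.snd]; nlinarith [r3sq, r3nn]
  have b5 : (1/4:ℝ) ≤ sqDist ((1+t)/2, (t-1) * Real.sqrt 3/2) (hexVtx 5) := by
    simp only [sqDist, hexVtx5, Prod.fst, Prod.snd]; nlinarith [r3sq, r3nn]
  apply le_antisymm
  · exact le_min (ea ▸ Nmin_le _ 1) (eb ▸ Nmin_le _ 2)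
  · refine le_Nmin ?_ ?_ ?_ ?_ ?_ ?_
    · exact q.trans b0
    · rw [ea]; exact min_le_left _ _
    · rw [eb]; exact min_le_right _ _
    · exact q.trans b3
    · exact q.trans b4
    · exact q.trans b5

lemma N2 {t : ℝ} (h0 : 0 ≤ t) (h1 : t ≤ 1) :
    Nmin (1 - t/2, t * Real.sqrt 3/2) = min (t^2) ((1-t)^2) := by
  have q := min_sq_le_quarter h0 h1
  have ea : sqDist (1 - t/2, t * Real.sqrt 3/2) (hexVtx 2) = t^2 := by
    simp only [sqDist, hexVtx2, Prod.fst, Prod.snd]; linear_combination (t^2/4) * r3sq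
  have eb : sqDist (1 - t/2, t * Real.sqrt 3/2) (hexVtx 3) = (1-t)^2 := by
    simp only [sqDist, hexVtx3, Prod.fst, Prod.snd]; linear_combination ((t-1)^2/4) * r3sq
  have b0 : (1/4:ℝ) ≤ sqDist (1 - t/2, t * Real.sqrt 3/2) (hexVtx 0) := by
    simp only [sqDist, hexVtx0, Prod.fst, Prod.snd]; nlinarith [r3sq, r3nn]
  have b1 : (1/4:ℝ) ≤ sqDist (1 - t/2, t * Real.sqrt 3/2) (hexVtx 1) := by
    simp only [sqDist, hexVtx1, Prod.fst, Prod.snd]; nlinarith [r3sq, r3nn]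
  have b4 : (1/4:ℝ) ≤ sqDist (1 - t/2, t * Real.sqrt 3/2) (hexVtx 4) := by
    simp only [sqDist, hexVtx4, Prod.fst, Prod.snd]; nlinarith [r3sq, r3nn]
  have b5 : (1/4:ℝ) ≤ sqDist (1 - t/2, t * Real.sqrt 3/2) (hexVtx 5) := by
    simp only [sqDist, hexVtx5, Prod.fst, Prod.snd]; nlinarith [r3sq, r3nn]
  apply le_antisymm
  · exact le_min (ea ▸ Nmin_le _ 2) (eb ▸ Nmin_le _ 3)
  · refine le_Nmin ?_ ?_ ?_ ?_ ?_ ?_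
    · exact q.trans b0
    · exact q.trans b1
    · rw [ea]; exact min_le_left _ _
    · rw [eb]; exact min_le_right _ _
    · exact q.trans b4
    · exact q.trans b5

lemma N3 {t : ℝ} (h0 : 0 ≤ t) (h1 : t ≤ 1) :
    Nmin (1/2 - t, Real.sqrt 3/2) = min (t^2) ((1-t)^2) := by
  have q := min_sq_le_quarter h0 h1
  have ea : sqDist (1/2 - t, Real.sqrt 3/2) (hexVtx 3) = t^2 := by
    simp only [sqDist, hexVtx3, Prod.fst, Prod.snd]; ring
  have eb : sqDist (1/2 - t, Real.sqrt 3/2) (hexVtx 4) = (1-t)^2 := by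
    simp only [sqDist, hexVtx4, Prod.fst, Prod.snd]; ring
  have b0 : (1/4:ℝ) ≤ sqDist (1/2 - t, Real.sqrt 3/2) (hexVtx 0) := by
    simp only [sqDist, hexVtx0, Prod.fst, Prod.snd]; nlinarith [r3sq, r3nn]
  have b1 : (1/4:ℝ) ≤ sqDist (1/2 - t, Real.sqrt 3/2) (hexVtx 1) := by
    simp only [sqDist, hexVtx1, Prod.fst, Prod.snd]; nlinarith [r3sq, r3nn]
  have b2 : (1/4:ℝ) ≤ sqDist (1/2 - t, Real.sqrt 3/2) (hexVtx 2) := by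
    simp only [sqDist, hexVtx2, Prod.fst, Prod.snd]; nlinarith [r3sq, r3nn]
  have b5 : (1/4:ℝ) ≤ sqDist (1/2 - t, Real.sqrt 3/2) (hexVtx 5) := by
    simp only [sqDist, hexVtx5, Prod.fst, Prod.snd]; nlinarith [r3sq, r3nn]
  apply le_antisymm
  · exact le_min (ea ▸ Nmin_le _ 3) (eb ▸ Nmin_le _ 4)
  · refine le_Nmin ?_ ?_ ?_ ?_ ?_ ?_
    · exact q.trans b0
    · exact q.trans b1
    · exact q.trans b2
    · rw [ea]; exact min_le_left _ _
    · rw [eb]; exact min_le_right _ _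
    · exact q.trans b5

lemma N4 {t : ℝ} (h0 : 0 ≤ t) (h1 : t ≤ 1) :
    Nmin (-(1+t)/2, (1-t) * Real.sqrt 3/2) = min (t^2) ((1-t)^2) := by
  have q := min_sq_le_quarter h0 h1
  have ea : sqDist (-(1+t)/2, (1-t) * Real.sqrt 3/2) (hexVtx 4) = t^2 := by
    simp only [sqDist, hexVtx4, Prod.fst, Prod.snd]; linear_combination (t^2/4) * r3sq
  have eb : sqDist (-(1+t)/2, (1-t) * Real.sqrt 3/2) (hexVtx 5) = (1-t)^2 := by
    simp only [sqDist, hexVtx5, Prod.fst, Prod.snd]; linear_combination ((1-t)^2/4) * r3sq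
  have b0 : (1/4:ℝ) ≤ sqDist (-(1+t)/2, (1-t) * Real.sqrt 3/2) (hexVtx 0) := by
    simp only [sqDist, hexVtx0, Prod.fst, Prod.snd]; nlinarith [r3sq, r3nn]
  have b1 : (1/4:ℝ) ≤ sqDist (-(1+t)/2, (1-t) * Real.sqrt 3/2) (hexVtx 1) := by
    simp only [sqDist, hexVtx1, Prod.fst, Prod.snd]; nlinarith [r3sq, r3nn]
  have b2 : (1/4:ℝ) ≤ sqDist (-(1+t)/2, (1-t) * Real.sqrt 3/2) (hexVtx 2) := by
    simp only [sqDist, hexVtx2, Prod.fst, Prod.snd]; nlinarith [r3sq, r3nn]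
  have b3 : (1/4:ℝ) ≤ sqDist (-(1+t)/2, (1-t) * Real.sqrt 3/2) (hexVtx 3) := by
    simp only [sqDist, hexVtx3, Prod.fst, Prod.snd]; nlinarith [r3sq, r3nn]
  apply le_antisymm
  · exact le_min (ea ▸ Nmin_le _ 4) (eb ▸ Nmin_le _ 5)
  · refine le_Nmin ?_ ?_ ?_ ?_ ?_ ?_
    · exact q.trans b0
    · exact q.trans b1
    · exact q.trans b2
    · exact q.trans b3
    · rw [ea]; exact min_le_left _ _
    · rw [eb]; exact min_le_right _ _

lemma N5 {t : ℝ} (h0 : 0 ≤ t) (h1 : t ≤ 1) :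
    Nmin (t/2 - 1, -(t * Real.sqrt 3/2)) = min (t^2) ((1-t)^2) := by
  have q := min_sq_le_quarter h0 h1
  have ea : sqDist (t/2 - 1, -(t * Real.sqrt 3/2)) (hexVtx 5) = t^2 := by
    simp only [sqDist, hexVtx5, Prod.fst, Prod.snd]; linear_combination (t^2/4) * r3sq
  have eb : sqDist (t/2 - 1, -(t * Real.sqrt 3/2)) (hexVtx 0) = (1-t)^2 := by
    simp only [sqDist, hexVtx0, Prod.fst, Prod.snd]; linear_combination ((1-t)^2/4) * r3sq
  have b1 : (1/4:ℝ) ≤ sqDist (t/2 - 1, -(t * Real.sqrt 3/2)) (hexVtx 1) := by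
    simp only [sqDist, hexVtx1, Prod.fst, Prod.snd]; nlinarith [r3sq, r3nn]
  have b2 : (1/4:ℝ) ≤ sqDist (t/2 - 1, -(t * Real.sqrt 3/2)) (hexVtx 2) := by
    simp only [sqDist, hexVtx2, Prod.fst, Prod.snd]; nlinarith [r3sq, r3nn]
  have b3 : (1/4:ℝ) ≤ sqDist (t/2 - 1, -(t * Real.sqrt 3/2)) (hexVtx 3) := by
    simp only [sqDist, hexVtx3, Prod.fst, Prod.snd]; nlinarith [r3sq, r3nn]
  have b4 : (1/4:ℝ) ≤ sqDist (t/2 - 1, -(t * Real.sqrt 3/2)) (hexVtx 4) := by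
    simp only [sqDist, hexVtx4, Prod.fst, Prod.snd]; nlinarith [r3sq, r3nn]
  apply le_antisymm
  · exact le_min (ea ▸ Nmin_le _ 5) (eb ▸ Nmin_le _ 0)
  · refine le_Nmin ?_ ?_ ?_ ?_ ?_ ?_
    · rw [eb]; exact min_le_right _ _
    · exact q.trans b1
    · exact q.trans b2
    · exact q.trans b3
    · exact q.trans b4
    · rw [ea]; exact min_le_left _ _

lemma min_eq_sub_max (a b : ℝ) : min a b = a - max 0 (a - b) := by
  rcases le_total a b with h|h
  · rw [min_eq_left h, max_eq_left (by linarith)]; ring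
  · rw [min_eq_right h, max_eq_right (by linarith)]; ring

lemma iq (a b A B C : ℝ) :
    ∫ t in a..b, (A*t^2 + B*t + C) = A*(b^3-a^3)/3 + B*(b^2-a^2)/2 + C*(b-a) := by
  have h : ∀ t ∈ Set.uIcc a b,
      HasDerivAt (fun u => A*u^3/3 + B*u^2/2 + C*u) (A*t^2 + B*t + C) t := by
    intro t _
    have h1 := (((hasDerivAt_pow 3 t).const_mul A).div_const 3).add
        ((((hasDerivAt_pow 2 t).const_mul B).div_const 2).add ((hasDerivAt_id t).const_mul C))
    convert h1 using 1 <;>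
      first
      | rfl
      | (funext u; simp; ring)
      | (simp; ring)
  rw [intervalIntegral.integral_eq_sub_of_hasDerivAt h
    ((by continuity : Continuous fun t : ℝ => A*t^2 + B*t + C).intervalIntegrable _ _)]
  ring

lemma cont_max_lin (A q : ℝ) : Continuous fun t : ℝ => max 0 (A*t - q) := by
  apply continuous_const.max; continuity

lemma piece_zero {A q : ℝ} (hA : 0 ≤ A) (hq : A/2 ≤ q) :
    ∫ t in (0:ℝ)..(1/2), max 0 (A*t - q) = 0 := by
  rw [intervalIntegral.integral_congr (g := fun _ => (0:ℝ)), intervalIntegral.integral_const]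
  · simp
  · intro t ht
    rw [Set.uIcc_of_le (by norm_num : (0:ℝ) ≤ 1/2)] at ht
    have h1 : A*t ≤ A/2 := by nlinarith [ht.1, ht.2]
    simp only; rw [max_eq_left (by linarith)]

lemma il (a b B C : ℝ) :
    ∫ t in a..b, (B*t + C) = B*(b^2-a^2)/2 + C*(b-a) := by
  have h : ∀ t ∈ Set.uIcc a b,
      HasDerivAt (fun u => B*u^2/2 + C*u) (B*t + C) t := by
    intro t _
    have h1 := ((((hasDerivAt_pow 2 t).const_mul B).div_const 2)).add ((hasDerivAt_id t).const_mul C)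
    convert h1 using 1 <;>
      first
      | rfl
      | (funext u; simp; ring)
      | (simp; ring)
  rw [intervalIntegral.integral_eq_sub_of_hasDerivAt h
    ((by continuity : Continuous fun t : ℝ => B*t + C).intervalIntegrable _ _)]
  ring

lemma piece_eq {A q : ℝ} (hA : 0 < A) (hq0 : 0 ≤ q) (hq : q ≤ A/2) :
    ∫ t in (0:ℝ)..(1/2), max 0 (A*t - q) = (A/2 - q)^2/(2*A) := by
  have hqA0 : 0 ≤ q/A := by positivity
  have hqA : q/A ≤ 1/2 := by rw [div_le_iff₀ hA]; linarith
  have hint : ∀ a b : ℝ, IntervalIntegrable (fun t => max 0 (A*t - q)) MeasureTheory.volume a b :=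
    fun a b => (cont_max_lin A q).intervalIntegrable a b
  rw [← intervalIntegral.integral_add_adjacent_intervals (b := q/A) (hint _ _) (hint _ _)]
  have h1 : ∫ t in (0:ℝ)..(q/A), max 0 (A*t - q) = 0 := by
    rw [intervalIntegral.integral_congr (g := fun _ => (0:ℝ)), intervalIntegral.integral_const]
    · simp
    · intro t ht
      rw [Set.uIcc_of_le hqA0] at ht
      have h2 : t*A ≤ q := (le_div_iff₀ hA).mp ht.2
      simp only; rw [max_eq_left (by nlinarith)]
  have h2 : ∫ t in (q/A)..(1/2:ℝ), max 0 (A*t - q) = ∫ t in (q/A)..(1/2:ℝ), (A*t + (-q)) := by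
    apply intervalIntegral.integral_congr
    intro t ht
    rw [Set.uIcc_of_le hqA] at ht
    have h3 : q ≤ t*A := (div_le_iff₀ hA).mp ht.1
    simp only; rw [max_eq_right (by nlinarith)]; ring
  rw [h1, h2, il]
  field_simp
  ring

lemma piece_le {A q : ℝ} (hA : 0 < A) (hq0 : 0 ≤ q) :
    ∫ t in (0:ℝ)..(1/2), max 0 (A*t - q) ≤ (A/2 - q)^2/(2*A) := by
  rcases le_or_gt q (A/2) with h|h
  · exact le_of_eq (piece_eq hA hq0 h)
  · rw [piece_zero hA.le h.le]; positivity

lemma contF (u h2 : ℝ) : Continuous fun t : ℝ => min (min (t^2) ((1-t)^2)) ((t-u)^2 + h2) := by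
  apply Continuous.min
  · exact (continuous_pow 2).min (by continuity)
  · continuity

def Ppc (u h2 : ℝ) : ℝ := ∫ t in (0:ℝ)..(1/2), max 0 (2*u*t - (u^2 + h2))

lemma decompL (u h2 : ℝ) :
    ∫ t in (0:ℝ)..(1/2), min (min (t^2) ((1-t)^2)) ((t-u)^2 + h2)
      = 1/24 - Ppc u h2 := by
  have hc : Continuous fun t : ℝ => max 0 (2*u*t - (u^2+h2)) := cont_max_lin _ _
  have hcongr : Set.EqOn (fun t : ℝ => min (min (t^2) ((1-t)^2)) ((t-u)^2 + h2))
      (fun t : ℝ => t^2 - max 0 (2*u*t - (u^2+h2))) (Set.uIcc 0 (1/2)) := by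
    intro t ht
    rw [Set.uIcc_of_le (by norm_num : (0:ℝ) ≤ 1/2)] at ht
    have h1 : t^2 ≤ (1-t)^2 := by nlinarith [ht.1, ht.2]
    simp only
    rw [min_eq_left h1, min_eq_sub_max,
      show t^2 - ((t-u)^2 + h2) = 2*u*t - (u^2 + h2) by ring]
  rw [intervalIntegral.integral_congr hcongr,
    intervalIntegral.integral_sub ((continuous_pow 2).intervalIntegrable _ _)
      (hc.intervalIntegrable _ _), integral_pow]
  unfold Ppc
  norm_num

lemma decompR (u h2 : ℝ) :
    ∫ t in (1/2:ℝ)..1, min (min (t^2) ((1-t)^2)) ((t-u)^2 + h2)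
      = 1/24 - Ppc (1-u) h2 := by
  have hcongr : Set.EqOn (fun t : ℝ => min (min (t^2) ((1-t)^2)) ((t-u)^2 + h2))
      (fun t : ℝ => (fun w : ℝ => min (min (w^2) ((1-w)^2)) ((w-(1-u))^2 + h2)) (1 - t))
      (Set.uIcc (1/2) 1) := by
    intro t _
    simp only
    rw [show ((1:ℝ)-(1-t))^2 = t^2 by ring, show ((1:ℝ)-t-(1-u))^2 = (t-u)^2 by ring,
      min_comm ((1-t)^2) (t^2)]
  rw [intervalIntegral.integral_congr hcongr,
    intervalIntegral.integral_comp_sub_left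
      (fun w : ℝ => min (min (w^2) ((1-w)^2)) ((w-(1-u))^2 + h2)) 1]
  norm_num [decompL (1-u) h2]

lemma fullF (u h2 : ℝ) :
    ∫ t in (0:ℝ)..1, min (min (t^2) ((1-t)^2)) ((t-u)^2 + h2)
      = 1/12 - Ppc u h2 - Ppc (1-u) h2 := by
  rw [← intervalIntegral.integral_add_adjacent_intervals (b := (1/2:ℝ))
    (((contF u h2)).intervalIntegrable _ _) (((contF u h2)).intervalIntegrable _ _),
    decompL, decompR]
  ring

lemma int_msq : ∫ t in (0:ℝ)..1, min (t^2) ((1-t)^2) = 1/12 := by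
  have hc : Continuous fun t : ℝ => min (t^2) ((1-t)^2) :=
    (continuous_pow 2).min (by continuity)
  rw [← intervalIntegral.integral_add_adjacent_intervals (b := (1/2:ℝ))
    (hc.intervalIntegrable _ _) (hc.intervalIntegrable _ _)]
  have h1 : ∫ t in (0:ℝ)..(1/2), min (t^2) ((1-t)^2) = ∫ t in (0:ℝ)..(1/2), t^2 := by
    apply intervalIntegral.integral_congr
    intro t ht
    rw [Set.uIcc_of_le (by norm_num : (0:ℝ) ≤ 1/2)] at ht
    simp only
    rw [min_eq_left (by nlinarith [ht.1, ht.2])]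
  have h2 : ∫ t in (1/2:ℝ)..1, min (t^2) ((1-t)^2)
      = ∫ t in (1/2:ℝ)..1, (fun w : ℝ => w^2) (1 - t) := by
    apply intervalIntegral.integral_congr
    intro t ht
    rw [Set.uIcc_of_le (by norm_num : (1/2:ℝ) ≤ 1)] at ht
    simp only
    rw [min_eq_right (by nlinarith [ht.1, ht.2])]
  rw [h1, h2, intervalIntegral.integral_comp_sub_left (fun w : ℝ => w^2) 1, integral_pow]
  norm_num [integral_pow]


lemma key_core {c h : ℝ} (hq : c^2 + h^2 + Real.sqrt 3 * h = 1/4) (hh0 : 0 ≤ h)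
    (hhub : h ≤ 1 - Real.sqrt 3/2) :
    Ppc (1/2 + c) (h^2) + Ppc (1 - (1/2 + c)) (h^2) ≤ 21/4 - 3*Real.sqrt 3 := by
  rcases eq_or_lt_of_le hh0 with hz|hpos
  · have hc2 : c^2 = 1/4 := by nlinarith [hq, hz.symm]
    have hcl : -(1/2) ≤ c := by nlinarith [sq_nonneg (c + 1/2)]
    have hcu : c ≤ 1/2 := by nlinarith [sq_nonneg (c - 1/2)]
    have p1 : Ppc (1/2 + c) (h^2) = 0 := by
      unfold Ppc
      apply piece_zero (by linarith)
      nlinarith [hz.symm]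
    have p2 : Ppc (1 - (1/2 + c)) (h^2) = 0 := by
      unfold Ppc
      apply piece_zero (by linarith)
      nlinarith [hz.symm]
    rw [p1, p2]
    nlinarith [r3ub]
  · have hrh : 0 ≤ Real.sqrt 3 * h := mul_nonneg r3nn hpos.le
    have hc2 : c^2 < 1/4 := by nlinarith [hq, mul_pos hpos hpos]
    have hA1 : 0 < 2*(1/2+c) := by nlinarith [sq_nonneg (c + 1/2)]
    have hA2 : 0 < 2*(1 - (1/2+c)) := by nlinarith [sq_nonneg (c - 1/2)]
    have hid1 : (2*(1/2+c))/2 - ((1/2+c)^2 + h^2) = Real.sqrt 3 * h := by linear_combination -hq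
    have hid2 : (2*(1 - (1/2+c)))/2 - ((1 - (1/2+c))^2 + h^2) = Real.sqrt 3 * h := by
      linear_combination -hq
    have hb1 : Ppc (1/2 + c) (h^2) ≤ (Real.sqrt 3 * h)^2/(2*(2*(1/2+c))) := by
      unfold Ppc
      have := piece_le (A := 2*(1/2+c)) (q := (1/2+c)^2 + h^2) hA1 (by positivity)
      rwa [hid1] at this
    have hb2 : Ppc (1 - (1/2 + c)) (h^2) ≤ (Real.sqrt 3 * h)^2/(2*(2*(1 - (1/2+c)))) := by
      unfold Ppc
      have := piece_le (A := 2*(1 - (1/2+c))) (q := (1 - (1/2+c))^2 + h^2) hA2 (by positivity)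
      rwa [hid2] at this
    have hsum : (Real.sqrt 3 * h)^2/(2*(2*(1/2+c))) + (Real.sqrt 3 * h)^2/(2*(2*(1 - (1/2+c))))
        ≤ 21/4 - 3*Real.sqrt 3 := by
      rw [div_add_div _ _ (by positivity) (by positivity), div_le_iff₀ (by positivity)]
      nlinarith [r3sq, hq,
        mul_nonneg (mul_nonneg (by nlinarith [r3lb] : (0:ℝ) ≤ 4*Real.sqrt 3 - 6)
          (by linarith : (0:ℝ) ≤ 1 - Real.sqrt 3/2 - h)) hpos.le,
        hpos, mul_pos hpos hpos, hrh]
    linarith [hb1, hb2, hsum]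

lemma key_low {c s : ℝ} (hcs : c^2 + s^2 = 1) (hs : s ≤ -(Real.sqrt 3/2)) :
    3*Real.sqrt 3 - 21/4 + 1/12
      ≤ ∫ t in (0:ℝ)..1, min (min (t^2) ((1-t)^2)) ((t - (1/2 + c))^2 + (-(Real.sqrt 3/2) - s)^2) := by
  have hsm1 : -1 ≤ s := by nlinarith [sq_nonneg c]
  have hh0 : 0 ≤ -(Real.sqrt 3/2) - s := by linarith
  have hhub : -(Real.sqrt 3/2) - s ≤ 1 - Real.sqrt 3/2 := by linarith
  have hq : c^2 + (-(Real.sqrt 3/2) - s)^2 + Real.sqrt 3 * (-(Real.sqrt 3/2) - s) = 1/4 := by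
    linear_combination hcs - (1/4) * r3sq
  have he : ∀ t : ℝ, (t - (1/2 + c))^2 + (-(Real.sqrt 3/2) - s)^2
      = (t - (1/2 + c))^2 + ((-(Real.sqrt 3/2) - s))^2 := fun t => rfl
  rw [fullF (1/2 + c) ((-(Real.sqrt 3/2) - s)^2)]
  have := key_core hq hh0 hhub
  linarith

lemma key_eq :
    ∫ t in (0:ℝ)..1, min (min (t^2) ((1-t)^2)) ((t - (1/2:ℝ))^2 + (1 - Real.sqrt 3/2)^2)
      = 3*Real.sqrt 3 - 21/4 + 1/12 := by
  rw [fullF]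
  have hq0 : (0:ℝ) ≤ (1/2:ℝ)^2 + (1 - Real.sqrt 3/2)^2 := by positivity
  have hqle : (1/2:ℝ)^2 + (1 - Real.sqrt 3/2)^2 ≤ (2*(1/2:ℝ))/2 := by nlinarith [r3sq, r3lb]
  have p1 : Ppc (1/2) ((1 - Real.sqrt 3/2)^2)
      = ((2*(1/2:ℝ))/2 - ((1/2:ℝ)^2 + (1 - Real.sqrt 3/2)^2))^2/(2*(2*(1/2:ℝ))) := by
    unfold Ppc
    exact piece_eq (by norm_num) hq0 hqle
  have e1 : Ppc (1 - 1/2 : ℝ) ((1 - Real.sqrt 3/2)^2) = Ppc (1/2 : ℝ) ((1 - Real.sqrt 3/2)^2) := by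
    congr 2
    norm_num
  rw [e1, p1]
  linear_combination (-(Real.sqrt 3)^2/16 + Real.sqrt 3/2 - 25/16) * r3sq


lemma cont_Mmin {f g : ℝ → ℝ} (hf : Continuous f) (hg : Continuous g) (a : ℝ × ℝ) :
    Continuous fun t => Mmin (f t, g t) a := by
  simp only [Mmin, Nmin, sqDist]
  fun_prop

lemma hexError_eq (a : ℝ × ℝ) :
    hexError ({a} ∪ hexβ) = ∑ j : Fin 6, (1 / 6 : ℝ) *
      ∫ t in (0 : ℝ)..1, Mmin ((1 - t) • hexVtx j + t • hexVtx (j + 1)) a := by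
  unfold hexError
  simp only [sInf_image7]

lemma pt_side1 {c s t : ℝ} (hcs : c^2 + s^2 = 1) (hcu : c ≤ 1/2) (ht0 : 0 ≤ t) (ht1 : t ≤ 1) :
    min (t^2) ((1-t)^2) ≤ sqDist ((1+t)/2, (t-1) * Real.sqrt 3/2) (c, s) := by
  refine le_trans (min_le_left _ _) ?_
  simp only [sqDist]
  nlinarith [r3sq, hcs, mul_nonneg (by linarith : (0:ℝ) ≤ 1 - t)
      (add_nonneg (sq_nonneg (c - 1/2)) (sq_nonneg (s + Real.sqrt 3/2))),
    mul_nonneg ht0 (by linarith : (0:ℝ) ≤ 1 - 2*c)]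

lemma pt_side5 {c s t : ℝ} (hcs : c^2 + s^2 = 1) (hcl : -(1/2) ≤ c) (ht0 : 0 ≤ t) (ht1 : t ≤ 1) :
    min (t^2) ((1-t)^2) ≤ sqDist (t/2 - 1, -(t * Real.sqrt 3/2)) (c, s) := by
  refine le_trans (min_le_right _ _) ?_
  simp only [sqDist]
  nlinarith [r3sq, hcs, mul_nonneg ht0
      (add_nonneg (sq_nonneg (c + 1/2)) (sq_nonneg (s + Real.sqrt 3/2))),
    mul_nonneg (by linarith : (0:ℝ) ≤ 1 - t) (by linarith : (0:ℝ) ≤ 1 + 2*c)]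

lemma pt_side2 {c s t : ℝ} (hs : s ≤ -(Real.sqrt 3/2)) (ht0 : 0 ≤ t) (ht1 : t ≤ 1) :
    min (t^2) ((1-t)^2) ≤ sqDist (1 - t/2, t * Real.sqrt 3/2) (c, s) := by
  refine le_trans (min_sq_le_quarter ht0 ht1) ?_
  simp only [sqDist]
  nlinarith [r3sq, r3lb, mul_nonneg ht0 r3nn, sq_nonneg (1 - t/2 - c),
    sq_nonneg (t * Real.sqrt 3/2 - s - 3/4)]

lemma pt_side3 {c s t : ℝ} (hs : s ≤ -(Real.sqrt 3/2)) (ht0 : 0 ≤ t) (ht1 : t ≤ 1) :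
    min (t^2) ((1-t)^2) ≤ sqDist (1/2 - t, Real.sqrt 3/2) (c, s) := by
  refine le_trans (min_sq_le_quarter ht0 ht1) ?_
  simp only [sqDist]
  nlinarith [r3sq, r3lb, sq_nonneg (1/2 - t - c)]

lemma pt_side4 {c s t : ℝ} (hs : s ≤ -(Real.sqrt 3/2)) (ht0 : 0 ≤ t) (ht1 : t ≤ 1) :
    min (t^2) ((1-t)^2) ≤ sqDist (-(1+t)/2, (1-t) * Real.sqrt 3/2) (c, s) := by
  refine le_trans (min_sq_le_quarter ht0 ht1) ?_
  simp only [sqDist]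
  nlinarith [r3sq, r3lb, mul_nonneg (by linarith : (0:ℝ) ≤ 1 - t) r3nn,
    sq_nonneg (-(1+t)/2 - c), sq_nonneg ((1-t) * Real.sqrt 3/2 - s - 3/4)]

lemma int_Mmin_ge {a : ℝ × ℝ} {g : ℝ → ℝ × ℝ} (hcont : Continuous fun t => Mmin (g t) a)
    (hpt : ∀ t, 0 ≤ t → t ≤ 1 → min (t^2) ((1-t)^2) ≤ Mmin (g t) a) :
    (1:ℝ)/12 ≤ ∫ t in (0:ℝ)..1, Mmin (g t) a := by
  rw [← int_msq]
  apply intervalIntegral.integral_mono_on (by norm_num)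
    (((continuous_pow 2).min (by fun_prop)).intervalIntegrable _ _)
    (hcont.intervalIntegrable _ _)
  intro t ht
  exact hpt t ht.1 ht.2

lemma lower_core {c s : ℝ} (hcs : c^2 + s^2 = 1) (hs : s ≤ -(Real.sqrt 3/2)) :
    Real.sqrt 3 / 2 - 19/24 ≤ hexError ({(c, s)} ∪ hexβ) := by
  have hs2 : 3/4 ≤ s^2 := by nlinarith [r3sq, r3lb]
  have hc2 : c^2 ≤ 1/4 := by nlinarith
  have hcl : -(1/2) ≤ c := by nlinarith [sq_nonneg (c + 1/2)]
  have hcu : c ≤ 1/2 := by nlinarith [sq_nonneg (c - 1/2)]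
  rw [hexError_eq, Fin.sum_univ_six]
  simp only [side0, side1, side2, side3, side4, side5]
  have h0 : 3*Real.sqrt 3 - 21/4 + 1/12
      ≤ ∫ t in (0:ℝ)..1, Mmin (t - 1/2, -(Real.sqrt 3/2)) (c, s) := by
    have hco : Set.EqOn (fun t : ℝ => Mmin (t - 1/2, -(Real.sqrt 3/2)) (c, s))
        (fun t : ℝ => min (min (t^2) ((1-t)^2)) ((t - (1/2 + c))^2 + (-(Real.sqrt 3/2) - s)^2))
        (Set.uIcc 0 1) := by
      intro t ht
      rw [Set.uIcc_of_le (by norm_num : (0:ℝ) ≤ 1)] at ht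
      simp only [Mmin]
      rw [N0 ht.1 ht.2, min_comm,
        show sqDist (t - 1/2, -(Real.sqrt 3/2)) (c, s)
          = (t - (1/2 + c))^2 + (-(Real.sqrt 3/2) - s)^2 by
            simp only [sqDist]; ring]
    rw [intervalIntegral.integral_congr hco]
    exact key_low hcs hs
  have h1 : (1:ℝ)/12 ≤ ∫ t in (0:ℝ)..1, Mmin ((1+t)/2, (t-1) * Real.sqrt 3/2) (c, s) := by
    apply int_Mmin_ge (cont_Mmin (by fun_prop) (by fun_prop) _)
    intro t ht0 ht1
    exact le_min (pt_side1 hcs hcu ht0 ht1) (le_of_eq (N1 ht0 ht1).symm)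
  have h2 : (1:ℝ)/12 ≤ ∫ t in (0:ℝ)..1, Mmin (1 - t/2, t * Real.sqrt 3/2) (c, s) := by
    apply int_Mmin_ge (cont_Mmin (by fun_prop) (by fun_prop) _)
    intro t ht0 ht1
    exact le_min (pt_side2 hs ht0 ht1) (le_of_eq (N2 ht0 ht1).symm)
  have h3 : (1:ℝ)/12 ≤ ∫ t in (0:ℝ)..1, Mmin (1/2 - t, Real.sqrt 3/2) (c, s) := by
    apply int_Mmin_ge (cont_Mmin (by fun_prop) (by fun_prop) _)
    intro t ht0 ht1
    exact le_min (pt_side3 hs ht0 ht1) (le_of_eq (N3 ht0 ht1).symm)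
  have h4 : (1:ℝ)/12 ≤ ∫ t in (0:ℝ)..1, Mmin (-(1+t)/2, (1-t) * Real.sqrt 3/2) (c, s) := by
    apply int_Mmin_ge (cont_Mmin (by fun_prop) (by fun_prop) _)
    intro t ht0 ht1
    exact le_min (pt_side4 hs ht0 ht1) (le_of_eq (N4 ht0 ht1).symm)
  have h5 : (1:ℝ)/12 ≤ ∫ t in (0:ℝ)..1, Mmin (t/2 - 1, -(t * Real.sqrt 3/2)) (c, s) := by
    apply int_Mmin_ge (cont_Mmin (by fun_prop) (by fun_prop) _)
    intro t ht0 ht1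
    exact le_min (pt_side5 hcs hcl ht0 ht1) (le_of_eq (N5 ht0 ht1).symm)
  linarith

lemma goal2 : hexError (({((0:ℝ), (-1:ℝ))} : Set (ℝ × ℝ)) ∪ hexβ) = Real.sqrt 3 / 2 - 19 / 24 := by
  rw [hexError_eq, Fin.sum_univ_six]
  simp only [side0, side1, side2, side3, side4, side5]
  have e0 : ∫ t in (0:ℝ)..1, Mmin (t - 1/2, -(Real.sqrt 3/2)) ((0:ℝ), (-1:ℝ))
      = 3*Real.sqrt 3 - 21/4 + 1/12 := by
    rw [← key_eq]
    apply intervalIntegral.integral_congr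
    intro t ht
    rw [Set.uIcc_of_le (by norm_num : (0:ℝ) ≤ 1)] at ht
    simp only [Mmin]
    rw [N0 ht.1 ht.2, min_comm,
      show sqDist (t - 1/2, -(Real.sqrt 3/2)) ((0:ℝ), (-1:ℝ))
        = (t - (1/2:ℝ))^2 + (1 - Real.sqrt 3/2)^2 by simp only [sqDist]; ring]
  have key : ∀ (g : ℝ → ℝ × ℝ),
      (∀ t, 0 ≤ t → t ≤ 1 → Nmin (g t) = min (t^2) ((1-t)^2)) →
      (∀ t, 0 ≤ t → t ≤ 1 → min (t^2) ((1-t)^2) ≤ sqDist (g t) ((0:ℝ), (-1:ℝ))) →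
      ∫ t in (0:ℝ)..1, Mmin (g t) ((0:ℝ), (-1:ℝ)) = 1/12 := by
    intro g hN hb
    rw [← int_msq]
    apply intervalIntegral.integral_congr
    intro t ht
    rw [Set.uIcc_of_le (by norm_num : (0:ℝ) ≤ 1)] at ht
    simp only [Mmin]
    rw [hN t ht.1 ht.2, min_eq_right ((hb t ht.1 ht.2))]
  have hsneg : ((-1:ℝ)) ≤ -(Real.sqrt 3/2) := by nlinarith [r3ub, r3nn]
  have hone : (0:ℝ)^2 + (-1:ℝ)^2 = 1 := by norm_num
  have e1 : ∫ t in (0:ℝ)..1, Mmin ((1+t)/2, (t-1) * Real.sqrt 3/2) ((0:ℝ), (-1:ℝ)) = 1/12 :=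
    key _ (fun t h0 h1 => N1 h0 h1) (fun t h0 h1 => pt_side1 hone (by norm_num) h0 h1)
  have e2 : ∫ t in (0:ℝ)..1, Mmin (1 - t/2, t * Real.sqrt 3/2) ((0:ℝ), (-1:ℝ)) = 1/12 :=
    key _ (fun t h0 h1 => N2 h0 h1) (fun t h0 h1 => pt_side2 hsneg h0 h1)
  have e3 : ∫ t in (0:ℝ)..1, Mmin (1/2 - t, Real.sqrt 3/2) ((0:ℝ), (-1:ℝ)) = 1/12 :=
    key _ (fun t h0 h1 => N3 h0 h1) (fun t h0 h1 => pt_side3 hsneg h0 h1)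
  have e4 : ∫ t in (0:ℝ)..1, Mmin (-(1+t)/2, (1-t) * Real.sqrt 3/2) ((0:ℝ), (-1:ℝ)) = 1/12 :=
    key _ (fun t h0 h1 => N4 h0 h1) (fun t h0 h1 => pt_side4 hsneg h0 h1)
  have e5 : ∫ t in (0:ℝ)..1, Mmin (t/2 - 1, -(t * Real.sqrt 3/2)) ((0:ℝ), (-1:ℝ)) = 1/12 :=
    key _ (fun t h0 h1 => N5 h0 h1) (fun t h0 h1 => pt_side5 hone (by norm_num) h0 h1)
  rw [e0, e1, e2, e3, e4, e5]
  ring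

def Rot (p : ℝ × ℝ) : ℝ × ℝ :=
  (p.1/2 - Real.sqrt 3 * p.2/2, Real.sqrt 3 * p.1/2 + p.2/2)

lemma Rot_sqDist (p q : ℝ × ℝ) : sqDist (Rot p) (Rot q) = sqDist p q := by
  simp only [sqDist, Rot]
  linear_combination (((p.1 - q.1)^2 + (p.2 - q.2)^2)/4) * r3sq

lemma Rot_vtx : ∀ j : Fin 6, Rot (hexVtx j) = hexVtx (j + 1) := by
  have tac : ∀ j : Fin 6, True := fun _ => trivial
  intro j
  fin_cases j
  · show Rot (hexVtx 0) = hexVtx 1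
    rw [hexVtx0, hexVtx1]
    refine Prod.ext ?_ ?_ <;> simp only [Rot, Prod.fst, Prod.snd]
    · linear_combination r3sq/4
    · ring
  · show Rot (hexVtx 1) = hexVtx 2
    rw [hexVtx1, hexVtx2]
    refine Prod.ext ?_ ?_ <;> simp only [Rot, Prod.fst, Prod.snd]
    · linear_combination r3sq/4
    · ring
  · show Rot (hexVtx 2) = hexVtx 3
    rw [hexVtx2, hexVtx3]
    refine Prod.ext ?_ ?_ <;> simp only [Rot, Prod.fst, Prod.snd]
    · ring
    · ring
  · show Rot (hexVtx 3) = hexVtx 4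
    rw [hexVtx3, hexVtx4]
    refine Prod.ext ?_ ?_ <;> simp only [Rot, Prod.fst, Prod.snd]
    · linear_combination -r3sq/4
    · ring
  · show Rot (hexVtx 4) = hexVtx 5
    rw [hexVtx4, hexVtx5]
    refine Prod.ext ?_ ?_ <;> simp only [Rot, Prod.fst, Prod.snd]
    · linear_combination -r3sq/4
    · ring
  · show Rot (hexVtx 5) = hexVtx 0
    rw [hexVtx5, hexVtx0]
    refine Prod.ext ?_ ?_ <;> simp only [Rot, Prod.fst, Prod.snd]
    · ring
    · ring

lemma Rot_circle {p : ℝ × ℝ} (h : p.1^2 + p.2^2 = 1) : (Rot p).1^2 + (Rot p).2^2 = 1 := by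
  simp only [Rot]
  linear_combination ((p.1^2 + p.2^2)/4) * r3sq + h

lemma Rot_affine (t : ℝ) (p q : ℝ × ℝ) :
    Rot ((1-t) • p + t • q) = (1-t) • Rot p + t • Rot q := by
  refine Prod.ext ?_ ?_ <;>
    simp only [Rot, Prod.smul_fst, Prod.smul_snd, Prod.fst_add, Prod.snd_add, smul_eq_mul] <;>
    ring

lemma Rot_hexβ : Rot '' hexβ = hexβ := by
  unfold hexβ
  rw [← Set.range_comp, show (Rot ∘ hexVtx) = hexVtx ∘ (fun j : Fin 6 => j + 1) from
    funext fun j => Rot_vtx j, Set.range_comp,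
    Set.range_eq_univ.2 (fun j => ⟨j - 1, by simp⟩), Set.image_univ]

lemma himg (a : ℝ × ℝ) (j : Fin 6) (t : ℝ) :
    (fun b => sqDist ((1 - t) • hexVtx (j+1) + t • hexVtx (j + 1 + 1)) b) '' ({Rot a} ∪ hexβ)
      = (fun b => sqDist ((1 - t) • hexVtx j + t • hexVtx (j + 1)) b) '' ({a} ∪ hexβ) := by
  have h1 : ({Rot a} ∪ hexβ : Set (ℝ × ℝ)) = Rot '' ({a} ∪ hexβ) := by
    rw [Set.image_union, Set.image_singleton, Rot_hexβ]
  rw [h1, Set.image_image]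
  apply Set.image_congr
  intro b _
  rw [show (1 - t) • hexVtx (j+1) + t • hexVtx (j + 1 + 1)
      = Rot ((1 - t) • hexVtx j + t • hexVtx (j + 1)) by
    rw [Rot_affine, Rot_vtx, Rot_vtx], Rot_sqDist]

lemma hexError_rot (a : ℝ × ℝ) :
    hexError ({Rot a} ∪ hexβ) = hexError ({a} ∪ hexβ) := by
  unfold hexError
  rw [show (∑ j : Fin 6, (1 / 6 : ℝ) *
      ∫ t in (0 : ℝ)..1,
        sInf ((fun b => sqDist ((1 - t) • hexVtx j + t • hexVtx (j + 1)) b) '' ({Rot a} ∪ hexβ)))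
    = ∑ j : Fin 6, (1 / 6 : ℝ) *
      ∫ t in (0 : ℝ)..1,
        sInf ((fun b => sqDist ((1 - t) • hexVtx (j+1) + t • hexVtx (j+1+1)) b) '' ({Rot a} ∪ hexβ))
    from (Fintype.sum_equiv (Equiv.addRight (1 : Fin 6)) _ _ (fun j => rfl)).symm]
  simp only [himg]

lemma six_y (c s : ℝ) (h : c^2 + s^2 = 1) :
    s ≤ -(Real.sqrt 3/2) ∨ Real.sqrt 3 * c/2 + s/2 ≤ -(Real.sqrt 3/2)
    ∨ (Real.sqrt 3 * c - s)/2 ≤ -(Real.sqrt 3/2) ∨ -s ≤ -(Real.sqrt 3/2)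
    ∨ -(Real.sqrt 3 * c/2 + s/2) ≤ -(Real.sqrt 3/2)
    ∨ (s - Real.sqrt 3 * c)/2 ≤ -(Real.sqrt 3/2) := by
  by_contra hcon
  push_neg at hcon
  obtain ⟨h1, h2, h3, h4, h5, h6⟩ := hcon
  have k1 : s^2 < 3/4 := by nlinarith [r3sq, r3lb]
  have k2 : (Real.sqrt 3 * c + s)^2 < 3 := by
    nlinarith [mul_pos (by linarith : (0:ℝ) < Real.sqrt 3 - (Real.sqrt 3 * c + s))
      (by linarith : (0:ℝ) < Real.sqrt 3 + (Real.sqrt 3 * c + s)), r3sq]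
  have k3 : (Real.sqrt 3 * c - s)^2 < 3 := by
    nlinarith [mul_pos (by linarith : (0:ℝ) < Real.sqrt 3 - (Real.sqrt 3 * c - s))
      (by linarith : (0:ℝ) < Real.sqrt 3 + (Real.sqrt 3 * c - s)), r3sq]
  have l2 : Real.sqrt 3 * c * s < s^2 := by nlinarith [k2, r3sq, h]
  have l3 : -(Real.sqrt 3 * c * s) < s^2 := by nlinarith [k3, r3sq, h]
  have l4 : 3*(c*s)^2 < s^4 := by
    nlinarith [mul_pos (by linarith : (0:ℝ) < s^2 - Real.sqrt 3*c*s)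
      (by linarith : (0:ℝ) < s^2 + Real.sqrt 3*c*s), r3sq, sq_nonneg (c*s)]
  have hc2 : c^2 = 1 - s^2 := by linarith
  nlinarith [l4, k1, hc2, sq_nonneg s, sq_nonneg (s*s), sq_nonneg (c*s),
    mul_nonneg (sq_nonneg s) (sq_nonneg s)]

lemma Rot2_y (p : ℝ × ℝ) : (Rot (Rot p)).2 = (Real.sqrt 3 * p.1 - p.2)/2 := by
  simp only [Rot]
  linear_combination -(p.2/4) * r3sq

lemma Rot3 (p : ℝ × ℝ) : Rot (Rot (Rot p)) = (-p.1, -p.2) := by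
  refine Prod.ext ?_ ?_ <;> simp only [Rot, Prod.fst, Prod.snd]
  · linear_combination (-(p.1/2) + (p.1 + Real.sqrt 3*p.2)/8) * r3sq
  · linear_combination (-(p.2/2) + (-(Real.sqrt 3*p.1) + p.2)/8) * r3sq

lemma lower_any {a : ℝ × ℝ} (ha : a.1^2 + a.2^2 = 1) :
    Real.sqrt 3 / 2 - 19/24 ≤ hexError ({a} ∪ hexβ) := by
  have key : ∀ b : ℝ × ℝ, b.1^2 + b.2^2 = 1 → b.2 ≤ -(Real.sqrt 3/2) →
      Real.sqrt 3 / 2 - 19/24 ≤ hexError ({b} ∪ hexβ) := by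
    intro b hb hy
    have hbe : b = (b.1, b.2) := rfl
    rw [hbe]
    exact lower_core hb hy
  have h1 := Rot_circle ha
  have h2 := Rot_circle h1
  have h3 := Rot_circle h2
  have h4 := Rot_circle h3
  have h5 := Rot_circle h4
  have e1 := hexError_rot a
  have e2 := hexError_rot (Rot a)
  have e3 := hexError_rot (Rot (Rot a))
  have e4 := hexError_rot (Rot (Rot (Rot a)))
  have e5 := hexError_rot (Rot (Rot (Rot (Rot a))))
  rcases six_y a.1 a.2 ha with hy|hy|hy|hy|hy|hy
  · exact key a ha hy
  · rw [← e1]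
    refine key _ h1 ?_
    show Real.sqrt 3 * a.1/2 + a.2/2 ≤ -(Real.sqrt 3/2)
    exact hy
  · rw [← e1, ← e2]
    refine key _ h2 ?_
    rw [Rot2_y]
    exact hy
  · rw [← e1, ← e2, ← e3]
    refine key _ h3 ?_
    rw [Rot3 a]
    exact hy
  · rw [← e1, ← e2, ← e3, ← e4]
    refine key _ h4 ?_
    rw [show Rot (Rot (Rot (Rot a))) = Rot (-a.1, -a.2) by rw [Rot3 a]]
    show Real.sqrt 3 * (-a.1, -a.2).1/2 + (-a.1, -a.2).2/2 ≤ -(Real.sqrt 3/2)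
    simp only [Prod.fst, Prod.snd]
    linarith [hy]
  · rw [← e1, ← e2, ← e3, ← e4, ← e5]
    refine key _ h5 ?_
    rw [show Rot (Rot (Rot (Rot (Rot a)))) = Rot (Rot (-a.1, -a.2)) by rw [Rot3 a], Rot2_y]
    simp only [Prod.fst, Prod.snd]
    linarith [hy]

/-- For the uniform distribution on the hexagon boundary, with the six vertices as conditional
set and the circumcircle as constraint, the 7-th conditional constrained quantization error is
`√3/2 − 19/24`, attained by `β ∪ {(0, −1)}`. -/
theorem hexagon_circumcircle_V7 :
    V7 = Real.sqrt 3 / 2 - 19 / 24 ∧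
      hexError (({((0 : ℝ), (-1 : ℝ))} : Set (ℝ × ℝ)) ∪ hexβ) = Real.sqrt 3 / 2 - 19 / 24 := by
  constructor
  · unfold V7
    apply IsLeast.csInf_eq
    constructor
    · rw [← goal2]
      refine Set.mem_image_of_mem _ ?_
      refine ⟨?_, Set.finite_singleton _, by simp⟩
      intro p hp
      simp only [Set.mem_singleton_iff] at hp
      subst hp
      norm_num
    · rintro y ⟨α, ⟨hsub, hfin, hcard⟩, rfl⟩
      rcases Set.eq_empty_or_nonempty α with rfl|⟨a, ha⟩
      · simp only [Set.empty_union]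
        rw [show hexβ = {hexVtx 0} ∪ hexβ from
            (Set.union_eq_self_of_subset_left (Set.singleton_subset_iff.mpr (Set.mem_range_self 0))).symm,
          show hexVtx 0 = ((-(1/2) : ℝ), (-(Real.sqrt 3/2) : ℝ)) from rfl]
        exact lower_core (by linear_combination r3sq/4) le_rfl
      · have hα : α = {a} := by
          apply Set.eq_singleton_iff_unique_mem.mpr
          refine ⟨ha, fun b hb => ?_⟩
          by_contra hne
          have hsub2 : ({b, a} : Set (ℝ × ℝ)) ⊆ α := by
            intro x hx
            rcases hx with rfl|hx
            · exact hb
            · rw [Set.mem_singleton_iff] at hx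
              subst hx
              exact ha
          have := Set.ncard_le_ncard hsub2 hfin
          rw [Set.ncard_pair hne] at this
          omega
        subst hα
        exact lower_any (hsub (Set.mem_singleton a))
  · exact goal2

end
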